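/- arXiv:1502.02906 — 7 statements merged into one kernel-verified Lean document; each statement's English description precedes it below -/
import Mathlib

section
/- The symbols τ_g(x,y) := ω(x,y,g)·ω(x, y g y⁻¹, y)⁻¹·ω(xy g y⁻¹ x⁻¹, x, y) satisfy the twisted cocycle condition τ_g(y,z)·τ_g(x,yz) = τ_{z g z⁻¹}(x,y)·τ_g(xy,z) for all x,y,z,g ∈ G. -/
/-- The 3-cocycle condition for a function `G³ → ℂˣ` with trivial coefficients. -/
def IsCocycle3 {G : Type*} [Group G] (ω : G → G → G → ℂˣ) : Prop :=
  ∀ x y z w : G,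
    ω y z w * (ω (x * y) z w)⁻¹ * ω x (y * z) w * (ω x y (z * w))⁻¹ * ω x y z = 1

/-- Normalization of a 3-cochain. -/
def IsNormalized3 {G : Type*} [Group G] (ω : G → G → G → ℂˣ) : Prop :=
  ∀ x y : G, ω 1 x y = 1 ∧ ω x 1 y = 1 ∧ ω x y 1 = 1

/-- The symbols `τ_g(x,y) = ω(x,y,g)·ω(x, y▷g, y)⁻¹·ω((xy)▷g, x, y)`. -/
def tau {G : Type*} [Group G] (ω : G → G → G → ℂˣ) (g x y : G) : ℂˣ :=
  ω x y g * (ω x (y * g * y⁻¹) y)⁻¹ * ω (x * y * g * y⁻¹ * x⁻¹) x y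

/-!
For an arbitrary 3-cochain `ω`, the two sides of the twisted cocycle condition differ by the
coboundary values `(dω)(x,y,z,g) · (dω)(x,(yz)▷g,y,z)` over `(dω)(x,y,z▷g,z) · (dω)((xyz)▷g,x,y,z)`:
this is an identity in the free abelian group on the values of `ω`. For a cocycle all four
values are `1`.
-/

section Coboundary

variable {G : Type*} [Group G] (ω : G → G → G → ℂˣ)

def coboundary3 (x y z w : G) : ℂˣ :=
  ω y z w * (ω (x * y) z w)⁻¹ * ω x (y * z) w * (ω x y (z * w))⁻¹ * ω x y z

theorem IsCocycle3.coboundary3_eq_one {ω : G → G → G → ℂˣ} (hω : IsCocycle3 ω) (x y z w : G) :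
    coboundary3 ω x y z w = 1 :=
  hω x y z w

theorem tau_mul_tau_mul_coboundary3 (x y z g : G) :
    tau ω g y z * tau ω g x (y * z) *
        (coboundary3 ω x y (z * g * z⁻¹) z *
          coboundary3 ω (x * y * z * g * z⁻¹ * y⁻¹ * x⁻¹) x y z) =
      tau ω (z * g * z⁻¹) x y * tau ω g (x * y) z *
        (coboundary3 ω x y z g * coboundary3 ω x (y * z * g * z⁻¹ * y⁻¹) y z) := by
  simp only [tau, coboundary3, mul_assoc, mul_inv_rev, inv_mul_cancel, mul_one]
  apply Additive.ofMul.injective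
  simp only [ofMul_mul, ofMul_inv]
  abel

end Coboundary

theorem twisted_cocycle_condition_general {G : Type*} [Group G] (ω : G → G → G → ℂˣ)
    (hω : IsCocycle3 ω) (x y z g : G) :
    tau ω g y z * tau ω g x (y * z) =
      tau ω (z * g * z⁻¹) x y * tau ω g (x * y) z := by
  simpa only [hω.coboundary3_eq_one, mul_one] using tau_mul_tau_mul_coboundary3 ω x y z g

/-- The twisted cocycle condition for the symbols τ. -/
theorem twisted_cocycle_condition {G : Type*} [Group G] (ω : G → G → G → ℂˣ)
    (hω : IsCocycle3 ω) (hn : IsNormalized3 ω) (x y z g : G) :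
    tau ω g y z * tau ω g x (y * z) =
      tau ω (z * g * z⁻¹) x y * tau ω g (x * y) z :=
  twisted_cocycle_condition_general ω hω x y z g
end

section
/- For any x ∈ G and m ∈ ℕ, ω(x, x^m, x) = τ_x(x, x^m) = τ_x(x^m, x), where τ_g(x,y) = ω(x,y,g)·ω(x, ygy⁻¹, y)⁻¹·ω(xygy⁻¹x⁻¹, x, y). -/
theorem tau_self_left_of_commute {G : Type*} [Group G] (ω : G → G → G → ℂˣ) {g y : G}
    (h : Commute g y) : tau ω g g y = ω g y g := by
  have hconj : y * g * y⁻¹ = g := h.symm.mul_inv_cancel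
  have hconj' : g * y * g * y⁻¹ * g⁻¹ = g := by
    rw [mul_assoc g y, mul_assoc g, hconj, mul_inv_cancel_right]
  rw [tau, hconj, hconj', inv_mul_cancel_right]

theorem tau_self_right_of_commute {G : Type*} [Group G] (ω : G → G → G → ℂˣ) {g x : G}
    (h : Commute g x) : tau ω g x g = ω g x g := by
  have hconj : x * g * g * g⁻¹ * x⁻¹ = g := by
    rw [mul_inv_cancel_right, h.symm.mul_inv_cancel]
  rw [tau, mul_inv_cancel_right, hconj, mul_inv_cancel, one_mul]

theorem omega_eq_tau_pow_general {G : Type*} [Group G] (ω : G → G → G → ℂˣ)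
    (x : G) (m : ℕ) :
    ω x (x ^ m) x = tau ω x x (x ^ m) ∧ ω x (x ^ m) x = tau ω x (x ^ m) x :=
  ⟨(tau_self_left_of_commute ω (Commute.self_pow x m)).symm,
    (tau_self_right_of_commute ω (Commute.self_pow x m)).symm⟩

/-- `ω(x,x^m,x) = τ_x(x,x^m) = τ_x(x^m,x)`. -/
theorem omega_eq_tau_pow {G : Type*} [Group G] (ω : G → G → G → ℂˣ)
    (hω : IsCocycle3 ω) (hn : IsNormalized3 ω) (x : G) (m : ℕ) :
    ω x (x ^ m) x = tau ω x x (x ^ m) ∧ ω x (x ^ m) x = tau ω x (x ^ m) x :=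
  omega_eq_tau_pow_general ω x m
end

section
/- Let ω : G³ → ℂˣ be a 3-cocycle with ω restricted to H³ trivial, g ∈ G, and S = Stab_H(gH) = {s ∈ H : g⁻¹sg ∈ H} the stabilizer in H of the left coset gH. Then the function β_g(s,t) = ω(s, tg, g⁻¹t⁻¹g)·ω(s,t,g)·ω(stg, g⁻¹t⁻¹g, g⁻¹s⁻¹g)⁻¹ is a 2-cocycle on S with values in ℂˣ. -/
/-- `β_g(s,t) = ω(s, tg, g⁻¹t⁻¹g)·ω(s,t,g)·ω(stg, g⁻¹t⁻¹g, g⁻¹s⁻¹g)⁻¹`. -/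
def betaG {G : Type*} [Group G] (ω : G → G → G → ℂˣ) (g s t : G) : ℂˣ :=
  ω s (t * g) (g⁻¹ * t⁻¹ * g) * ω s t g * (ω (s * t * g) (g⁻¹ * t⁻¹ * g) (g⁻¹ * s⁻¹ * g))⁻¹

theorem betaG_coboundary_eq {G : Type*} [Group G] {ω : G → G → G → ℂˣ} (hω : IsCocycle3 ω)
    (g s t u : G) :
    betaG ω g t u * (betaG ω g (s * t) u)⁻¹ * betaG ω g s (t * u) * (betaG ω g s t)⁻¹ =
      (ω s t u)⁻¹ * ω (g⁻¹ * u⁻¹ * g) (g⁻¹ * t⁻¹ * g) (g⁻¹ * s⁻¹ * g) := by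
  have h₁ := hω s t u g
  have h₂ := hω s t (u * g) (g⁻¹ * u⁻¹ * g)
  have h₃ := hω s (t * u * g) (g⁻¹ * u⁻¹ * g) (g⁻¹ * t⁻¹ * g)
  have h₄ := hω (s * t * u * g) (g⁻¹ * u⁻¹ * g) (g⁻¹ * t⁻¹ * g) (g⁻¹ * s⁻¹ * g)
  simp only [betaG, mul_assoc, mul_inv_rev, inv_inv, mul_inv_cancel_left] at h₁ h₂ h₃ h₄ ⊢
  apply Additive.ofMul.injective
  apply_fun Additive.ofMul at h₁ h₂ h₃ h₄
  simp only [ofMul_mul, ofMul_inv, ofMul_one] at h₁ h₂ h₃ h₄ ⊢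
  linear_combination (norm := abel) h₁ + h₂ - h₃ - h₄

theorem Subgroup.conj_inv_mem {G : Type*} [Group G] (H : Subgroup G) {g u : G}
    (h : g⁻¹ * u * g ∈ H) : g⁻¹ * u⁻¹ * g ∈ H := by
  simpa [mul_assoc] using H.inv_mem h

theorem betaG_is_two_cocycle_general {G : Type*} [Group G] (H : Subgroup G)
    (ω : G → G → G → ℂˣ) (hω : IsCocycle3 ω)
    (hHtriv : ∀ a ∈ H, ∀ b ∈ H, ∀ c ∈ H, ω a b c = 1) (g : G) :
    ∀ s t u : G, s ∈ H → g⁻¹ * s * g ∈ H → t ∈ H → g⁻¹ * t * g ∈ H →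
      u ∈ H → g⁻¹ * u * g ∈ H →
      betaG ω g t u * (betaG ω g (s * t) u)⁻¹ * betaG ω g s (t * u) *
        (betaG ω g s t)⁻¹ = 1 := by
  intro s t u hs hs' ht ht' hu hu'
  rw [betaG_coboundary_eq hω, hHtriv s hs t ht u hu,
    hHtriv _ (H.conj_inv_mem hu') _ (H.conj_inv_mem ht') _ (H.conj_inv_mem hs'), inv_one, one_mul]

/-- `β_g` is a 2-cocycle on the stabilizer `S = {s ∈ H : g⁻¹sg ∈ H}`. -/
theorem betaG_is_two_cocycle {G : Type*} [Group G] (H : Subgroup G)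
    (ω : G → G → G → ℂˣ) (hω : IsCocycle3 ω) (hn : IsNormalized3 ω)
    (hHtriv : ∀ a ∈ H, ∀ b ∈ H, ∀ c ∈ H, ω a b c = 1) (g : G) :
    ∀ s t u : G, s ∈ H → g⁻¹ * s * g ∈ H → t ∈ H → g⁻¹ * t * g ∈ H →
      u ∈ H → g⁻¹ * u * g ∈ H →
      betaG ω g t u * (betaG ω g (s * t) u)⁻¹ * betaG ω g s (t * u) *
        (betaG ω g s t)⁻¹ = 1 :=
  betaG_is_two_cocycle_general H ω hω hHtriv g
end

section
/- If ω = dη is the coboundary of a normalized 2-cochain η on G, and ψ = η restricted to H², then the 2-cocycle β_g(s,t) = ψ(s,t)·ψ(g⁻¹t⁻¹g, g⁻¹s⁻¹g)·ω(s, tg, g⁻¹t⁻¹g)·ω(s,t,g)·ω(stg, g⁻¹t⁻¹g, g⁻¹s⁻¹g)⁻¹ on S = Stab_H(gH) equals the coboundary dλ of the 1-cochain λ(s) = η(sg, g⁻¹s⁻¹g)·η(s,g); that is, β_g(s,t) = λ(t)·λ(st)⁻¹·λ(s) for all s,t ∈ S. -/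
/-- The coboundary of a 2-cochain: `(dη)(x,y,z) = η(y,z)·η(xy,z)⁻¹·η(x,yz)·η(x,y)⁻¹`. -/
def d2 {G : Type*} [Group G] (η : G → G → ℂˣ) (x y z : G) : ℂˣ :=
  η y z * (η (x * y) z)⁻¹ * η x (y * z) * (η x y)⁻¹

/-!
With `a = g⁻¹t⁻¹g` and `b = g⁻¹s⁻¹g` the products inside the three coboundaries collapse:
`tg·a = g`, `stg·a = sg` and `ab = g⁻¹(st)⁻¹g`. After expanding, the factors `η(s,t)`, `η(a,b)`,
`η(s,tg)` and `η(stg,a)` cancel in pairs, and the six that remain are exactly those of `dλ(s,t)`.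
-/

theorem d2_eq_of_mul_eq {G : Type*} [Group G] (η : G → G → ℂˣ) {x y z xy yz : G}
    (hxy : x * y = xy) (hyz : y * z = yz) :
    d2 η x y z = η y z * (η xy z)⁻¹ * η x yz * (η x y)⁻¹ := by
  subst hxy hyz
  rfl

theorem betaG_coboundary_general {G : Type*} [Group G]
    (η : G → G → ℂˣ) (g : G)
    (s t : G) :
    η s t * η (g⁻¹ * t⁻¹ * g) (g⁻¹ * s⁻¹ * g) *
      d2 η s (t * g) (g⁻¹ * t⁻¹ * g) * d2 η s t g *
      (d2 η (s * t * g) (g⁻¹ * t⁻¹ * g) (g⁻¹ * s⁻¹ * g))⁻¹ =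
    (η (t * g) (g⁻¹ * t⁻¹ * g) * η t g) *
      (η (s * t * g) (g⁻¹ * (s * t)⁻¹ * g) * η (s * t) g)⁻¹ *
      (η (s * g) (g⁻¹ * s⁻¹ * g) * η s g) := by
  have htg : t * g * (g⁻¹ * t⁻¹ * g) = g := by group
  have hstg : s * t * g * (g⁻¹ * t⁻¹ * g) = s * g := by group
  have hconj : g⁻¹ * t⁻¹ * g * (g⁻¹ * s⁻¹ * g) = g⁻¹ * (s * t)⁻¹ * g := by group
  rw [d2_eq_of_mul_eq η (mul_assoc s t g).symm htg, d2_eq_of_mul_eq η rfl rfl,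
    d2_eq_of_mul_eq η hstg hconj]
  ext
  push_cast
  field_simp

/-- If `ω = dη` and `ψ = η|_{H²}` then
`β_g(s,t) = ψ(s,t)·ψ(g⁻¹t⁻¹g, g⁻¹s⁻¹g)·ω(s,tg,g⁻¹t⁻¹g)·ω(s,t,g)·ω(stg,g⁻¹t⁻¹g,g⁻¹s⁻¹g)⁻¹`
is the coboundary of `λ(s) = η(sg, g⁻¹s⁻¹g)·η(s,g)`. -/
theorem betaG_coboundary {G : Type*} [Group G] (H : Subgroup G)
    (η : G → G → ℂˣ) (hη : ∀ x : G, η 1 x = 1 ∧ η x 1 = 1) (g : G)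
    (s t : G) (hs : s ∈ H) (hs' : g⁻¹ * s * g ∈ H)
    (ht : t ∈ H) (ht' : g⁻¹ * t * g ∈ H) :
    η s t * η (g⁻¹ * t⁻¹ * g) (g⁻¹ * s⁻¹ * g) *
      d2 η s (t * g) (g⁻¹ * t⁻¹ * g) * d2 η s t g *
      (d2 η (s * t * g) (g⁻¹ * t⁻¹ * g) (g⁻¹ * s⁻¹ * g))⁻¹ =
    (η (t * g) (g⁻¹ * t⁻¹ * g) * η t g) *
      (η (s * t * g) (g⁻¹ * (s * t)⁻¹ * g) * η (s * t) g)⁻¹ *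
      (η (s * g) (g⁻¹ * s⁻¹ * g) * η s g) :=
  betaG_coboundary_general η g s t
end

section
/- Let κ be the standard 3-cocycle on ℤ/Nℤ, k ∈ ℤ, e = N/gcd(k,N) the order of k̄ in ℤ/Nℤ, and a ∈ ℤ. Then ∏_{r=1}^{e} κ(k̄, (a+r)·k̄, k̄) = exp(2πi·k²/(N·gcd(k,N))). -/
/-!
Put `x r = (a + r) k̄`, so that `k̄ + x r = x (r + 1)` and `x (e + 1) = x 1`. The exponent of
`κ(k̄, x r, k̄)` is `(2πi/N²) [k] ([k] + [x r] - [x (r + 1)])`, so over the period `r = 1, …, e`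
the exponents telescope to `(2πi/N²) e [k]² = 2πi [k]² / (N gcd(k, N))`. Finally `[k]² ≡ k²`
modulo `N gcd(k, N)`, because `N ∣ [k] - k` and `gcd(k, N) ∣ [k] + k`.
-/

open Complex

noncomputable def kappa (N : ℕ) [NeZero N] (j k l : ZMod N) : ℂˣ :=
  Units.mk0
    (Complex.exp (2 * Real.pi * Complex.I / (N ^ 2 : ℂ) * (l.val : ℂ) *
      ((j.val : ℂ) + (k.val : ℂ) - ((j + k).val : ℂ))))
    (Complex.exp_ne_zero _)

theorem ZMod.sum_Icc_val_add_val_sub_val_add_of_natCast_mul_eq_zero {N : ℕ} [NeZero N]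
    (j x : ZMod N) {n : ℕ} (hn : (n : ZMod N) * j = 0) :
    ∑ r ∈ Finset.Icc 1 n,
        ((j.val : ℤ) + (x + r * j).val - (j + (x + r * j)).val) = n * j.val := by
  rcases Nat.eq_zero_or_pos n with rfl | hpos
  · simp
  have hperiod : x + ((n + 1 : ℕ) : ZMod N) * j = x + ((1 : ℕ) : ZMod N) * j := by
    push_cast; linear_combination hn
  have htel : ∑ r ∈ Finset.Icc 1 n,
      (((x + ((r + 1 : ℕ) : ZMod N) * j).val : ℤ) - (x + r * j).val) = 0 := by
    rw [Finset.sum_Icc_sub hpos (fun r : ℕ ↦ ((x + r * j).val : ℤ)), hperiod, sub_self]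
  calc ∑ r ∈ Finset.Icc 1 n, ((j.val : ℤ) + (x + r * j).val - (j + (x + r * j)).val)
      = ∑ r ∈ Finset.Icc 1 n, ((j.val : ℤ) - (((x + ((r + 1 : ℕ) : ZMod N) * j).val : ℤ)
          - (x + r * j).val)) := by
        refine Finset.sum_congr rfl fun r _ ↦ ?_
        rw [show j + (x + r * j) = x + ((r + 1 : ℕ) : ZMod N) * j by push_cast; ring]
        ring
    _ = n * j.val := by simp only [Finset.sum_sub_distrib, htel]; simp

theorem prod_Icc_kappa_of_natCast_mul_eq_zero (N : ℕ) [NeZero N] (j x l : ZMod N) {n : ℕ}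
    (hn : (n : ZMod N) * j = 0) :
    ∏ r ∈ Finset.Icc 1 n, kappa N j (x + r * j) l =
      Units.mk0 (exp (2 * Real.pi * I / (N ^ 2 : ℂ) * l.val * (n * j.val)))
        (exp_ne_zero _) := by
  have hsum := congrArg (Int.cast : ℤ → ℂ)
    (ZMod.sum_Icc_val_add_val_sub_val_add_of_natCast_mul_eq_zero j x hn)
  push_cast at hsum
  ext
  simp only [kappa, Units.coe_prod, Units.val_mk0, ← exp_sum, ← Finset.mul_sum, hsum]

theorem Complex.exp_two_pi_I_mul_div_eq_of_dvd_sub {m u v : ℤ} (h : m ∣ u - v) :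
    exp (2 * Real.pi * I * u / m) = exp (2 * Real.pi * I * v / m) := by
  obtain ⟨t, ht⟩ := h
  obtain rfl : u = v + m * t := by linarith
  rcases eq_or_ne m 0 with rfl | hm
  · simp
  rw [exp_eq_exp_iff_exists_int]
  refine ⟨t, ?_⟩
  have hmC : (m : ℂ) ≠ 0 := by exact_mod_cast hm
  push_cast
  field_simp

/-- `∏_{r=1}^{e} κ(k̄, (a+r)k̄, k̄) = exp(2πi·k²/(N·gcd(k,N)))` where
`e = N/gcd(k,N)` is the order of `k̄` in `ℤ/Nℤ`. -/
theorem kappa_product_formula (N : ℕ) [NeZero N] (k a : ℤ) (e : ℕ)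
    (he : e = N / Int.gcd k N) :
    ∏ r ∈ Finset.Icc 1 e,
        kappa N (k : ZMod N) (((a + (r : ℤ)) * k : ℤ) : ZMod N) (k : ZMod N) =
      Units.mk0
        (Complex.exp (2 * Real.pi * Complex.I * (k : ℂ) ^ 2 /
          ((N : ℂ) * (Int.gcd k N : ℂ))))
        (Complex.exp_ne_zero _) := by
  set g := Int.gcd k N
  have hgk : (g : ℤ) ∣ k := Int.gcd_dvd_left k N
  have hgN : (g : ℤ) ∣ N := Int.gcd_dvd_right k N
  have heg : e * g = N := he ▸ Nat.div_mul_cancel (Int.natCast_dvd_natCast.mp hgN)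
  have horder : (e : ZMod N) * k = 0 := by
    obtain ⟨k', hk'⟩ := hgk
    rw [← Int.cast_natCast, ← Int.cast_mul, ZMod.intCast_zmod_eq_zero_iff_dvd]
    exact ⟨k', by rw [hk', ← heg]; push_cast; ring⟩
  simp only [Int.cast_mul, Int.cast_add, Int.cast_natCast, add_mul]
  rw [prod_Icc_kappa_of_natCast_mul_eq_zero N _ _ _ horder]
  ext
  have hdvd : ((N : ℤ) * g) ∣ ((k : ZMod N).val : ℤ) ^ 2 - k ^ 2 := by
    rw [sq_sub_sq, mul_comm (N : ℤ), ZMod.val_intCast]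
    exact mul_dvd_mul (dvd_add ((EuclideanDomain.dvd_mod_iff hgN).mpr hgk) hgk)
      Int.dvd_emod_sub_self
  calc exp (2 * Real.pi * I / (N ^ 2 : ℂ) * (k : ZMod N).val * (e * (k : ZMod N).val))
      = exp (2 * Real.pi * I * (((k : ZMod N).val ^ 2 : ℤ) : ℂ) / ((N * g : ℤ) : ℂ)) := by
        rw [← heg]; push_cast; field_simp
    _ = exp (2 * Real.pi * I * ((k ^ 2 : ℤ) : ℂ) / ((N * g : ℤ) : ℂ)) :=
        Complex.exp_two_pi_I_mul_div_eq_of_dvd_sub hdvd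
    _ = _ := by push_cast; rfl
end

section
/- Let G act on V so that V is graded by G and carries a τ-twisted G-action with ρ(x)ρ(y) = τ_{|v|}(x,y)ρ(xy) on homogeneous components. The pairing between the two projective-representation descriptions: for g ∈ G, the action x * v := ω(g,x,x⁻¹)⁻¹·(x·v) on the g-homogeneous component of V ⊗ ℂ[G] converts a τ_g-projective representation of C_G(g) into a β_{(g,1)}-projective representation, where β and τ differ by the coboundary of λ_g(x) = ω(g,x,x⁻¹)⁻¹: i.e. β_{(g,1)}(x,y) = τ_g(x,y)·λ_g(y)·λ_g(xy)⁻¹·λ_g(x) for all x,y ∈ C_G(g). -/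
/-- `ϖ((x,f),(y,g),(z,h)) = ω(x,y,z)·ω(f,g,h)⁻¹`. -/
def varpi {G : Type*} [Group G] (ω : G → G → G → ℂˣ) :
    G × G → G × G → G × G → ℂˣ :=
  fun a b c => ω a.1 b.1 c.1 * (ω a.2 b.2 c.2)⁻¹

/-- `β_{(g,1)}(s,t)` on `Stab_Δ((g,1)Δ) ≅ C_G(g)`, built from `ϖ`. -/
def betaDouble {G : Type*} [Group G] (ω : G → G → G → ℂˣ) (g s t : G) : ℂˣ :=
  varpi ω (s, s) ((t, t) * (g, 1)) ((g, 1)⁻¹ * (t, t)⁻¹ * (g, 1)) *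
    varpi ω (s, s) (t, t) (g, 1) *
    (varpi ω ((s, s) * (t, t) * (g, 1)) ((g, 1)⁻¹ * (t, t)⁻¹ * (g, 1))
      ((g, 1)⁻¹ * (s, s)⁻¹ * (g, 1)))⁻¹

/-!
On the centralizer of `g` every conjugation by `g` in `β_{(g,1)}(x,y)` disappears, leaving five
values of `ω`. The cocycle identity at `(x,g,y,y⁻¹)`, and at `(bx,y,y⁻¹,x⁻¹)` and
`(bx,x⁻¹,xy,(xy)⁻¹)` for `b = 1` and `b = g`, eliminates `ω(x,yg,y⁻¹)`, `ω(xy,y⁻¹,x⁻¹)` and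
`ω(gxy,y⁻¹,x⁻¹)`; after one more instance at `(g,x,x⁻¹,xy)` both sides are the same product of
values of `ω`.
-/

namespace IsCocycle3

variable {G : Type*} [Group G] {ω : G → G → G → ℂˣ}

theorem pentagon (hω : IsCocycle3 ω) (x y z w : G) :
    ω (x * y) z w * ω x y (z * w) = ω y z w * ω x (y * z) w * ω x y z := by
  have h := hω x y z w
  rw [Units.ext_iff] at h ⊢
  push_cast at h ⊢
  field_simp at h
  exact h.symm

theorem pentagon_inv_right (hω : IsCocycle3 ω) (hn : IsNormalized3 ω) (a b c : G) :
    ω a (b * c) c⁻¹ = ω (a * b) c c⁻¹ * (ω b c c⁻¹)⁻¹ * (ω a b c)⁻¹ := by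
  have h := hω.pentagon a b c c⁻¹
  rw [mul_inv_cancel, (hn a b).2.2, mul_one] at h
  rw [h, Units.ext_iff]
  push_cast
  field_simp

theorem pentagon_inv_mid (hω : IsCocycle3 ω) (hn : IsNormalized3 ω) (a b c : G) :
    ω (a * b) b⁻¹ c = ω b b⁻¹ c * ω a b b⁻¹ * (ω a b (b⁻¹ * c))⁻¹ := by
  have h := hω.pentagon a b b⁻¹ c
  rw [mul_inv_cancel, (hn a c).2.1, mul_one] at h
  rw [← h, Units.ext_iff]
  push_cast
  field_simp

theorem mul_mul_inv_inv (hω : IsCocycle3 ω) (hn : IsNormalized3 ω) (b x y : G) :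
    ω (b * x * y) y⁻¹ x⁻¹ = ω y y⁻¹ x⁻¹ * ω (b * x) y y⁻¹ * ω x⁻¹ (x * y) (x * y)⁻¹ *
      ω (b * x) x⁻¹ (x * y) * (ω b (x * y) (x * y)⁻¹)⁻¹ := by
  have h := hω.pentagon_inv_right hn (b * x) x⁻¹ (x * y)
  rw [inv_mul_cancel_left, mul_inv_cancel_right] at h
  rw [hω.pentagon_inv_mid hn, ← mul_inv_rev, h, Units.ext_iff]
  push_cast
  field_simp

theorem mul_inv_inv (hω : IsCocycle3 ω) (hn : IsNormalized3 ω) (x y : G) :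
    ω (x * y) y⁻¹ x⁻¹ = ω y y⁻¹ x⁻¹ * ω x y y⁻¹ * ω x⁻¹ (x * y) (x * y)⁻¹ * ω x x⁻¹ (x * y) := by
  simpa [(hn _ _).1] using hω.mul_mul_inv_inv hn 1 x y

end IsCocycle3

section

variable {G : Type*} [Group G] {ω : G → G → G → ℂˣ} {g x y : G}

theorem tau_of_commute (hx : Commute x g) (hy : Commute y g) :
    tau ω g x y = ω x y g * (ω x g y)⁻¹ * ω g x y := by
  have hxy : x * y * g * y⁻¹ * x⁻¹ = g := by
    rw [mul_assoc x, mul_assoc x, hy.mul_inv_cancel, hx.mul_inv_cancel]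
  rw [tau, hy.mul_inv_cancel, hxy]

theorem betaDouble_of_commute (hn : IsNormalized3 ω) (hx : Commute x g) (hy : Commute y g) :
    betaDouble ω g x y = ω x (y * g) y⁻¹ * (ω x y y⁻¹)⁻¹ * ω x y g *
      (ω (x * y * g) y⁻¹ x⁻¹ * (ω (x * y) y⁻¹ x⁻¹)⁻¹)⁻¹ := by
  simp only [betaDouble, varpi, Prod.mk_mul_mk, Prod.inv_mk, inv_one, one_mul, mul_one,
    hx.inv_left.symm.inv_mul_cancel, hy.inv_left.symm.inv_mul_cancel, (hn x y).2.2]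

end

/-- On the centralizer `C_G(g)`, the cocycles `β_{(g,1)}` and `τ_g` differ by the
coboundary of `λ_g(x) = ω(g,x,x⁻¹)⁻¹`:
`β_{(g,1)}(x,y) = τ_g(x,y)·λ_g(y)·λ_g(xy)⁻¹·λ_g(x)`. -/
theorem betaDouble_eq_tau_coboundary {G : Type*} [Group G]
    (ω : G → G → G → ℂˣ) (hω : IsCocycle3 ω) (hn : IsNormalized3 ω)
    (g x y : G) (hx : x * g = g * x) (hy : y * g = g * y) :
    betaDouble ω g x y =
      tau ω g x y * (ω g y y⁻¹)⁻¹ * ((ω g (x * y) (x * y)⁻¹)⁻¹)⁻¹ *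
        (ω g x x⁻¹)⁻¹ := by
  have hxyg : x * y * g = g * x * y := by rw [mul_assoc, hy, ← mul_assoc, hx]
  rw [betaDouble_of_commute hn hx hy, tau_of_commute hx hy, hxyg, hω.mul_mul_inv_inv hn,
    hω.mul_inv_inv hn, hy, hω.pentagon_inv_right hn, hx, hω.pentagon_inv_mid hn g x,
    inv_mul_cancel_left, Units.ext_iff]
  push_cast
  field_simp
end

section
/- Let κ be the standard 3-cocycle on ℤ/2ℤ, and let ω' = ω·κ∘p for a surjective homomorphism p : G → ℤ/2ℤ whose kernel N₀ = ker p is a subgroup of index two. For x ∈ G and m even, κ(p(x), p(x)^m, p(x)) = 1; for x ∉ N₀ and m odd, κ(p(x), p(x)^m, p(x)) = −1. Consequently, for g ∉ ker p and x ∈ G, the recursively defined quantities π'_m for ω' and π_m for ω satisfy π'_m(gx)/π'_m(x) = ε(m)·π_m(gx)/π_m(x), where ε(m) = 1 for m ≡ 0,1 (mod 4) and ε(m) = −1 for m ≡ 2,3 (mod 4). -/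
/-- The nontrivial normalized 3-cocycle on `ℤ/2ℤ`: `κ(1,1,1) = −1`, `κ = 1` whenever
some argument is `0`. -/
noncomputable def kappa2 (j k l : ZMod 2) : ℂˣ :=
  if j = 1 ∧ k = 1 ∧ l = 1 then -1 else 1

/-- Let `ω' = ω·(κ∘p)` for a surjective homomorphism `p : G → ℤ/2ℤ`. Then
(i) for `m` even `κ(p(x), p(x^m), p(x)) = 1`; (ii) for `x ∉ ker p` and `m` odd
`κ(p(x), p(x^m), p(x)) = −1`; (iii) for `g ∉ ker p` and all `x`,
`π'_m(gx)/π'_m(x) = ε(m)·π_m(gx)/π_m(x)` with `ε(m) = 1` for `m ≡ 0,1 (mod 4)`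
and `ε(m) = −1` for `m ≡ 2,3 (mod 4)`. -/
theorem twisted_double_sign_change {G : Type*} [Group G]
    (ω : G → G → G → ℂˣ)
    (hωcoc : ∀ x y z w : G,
      ω y z w * (ω (x * y) z w)⁻¹ * ω x (y * z) w * (ω x y (z * w))⁻¹ * ω x y z = 1)
    (hωn : ∀ x y : G, ω 1 x y = 1 ∧ ω x 1 y = 1 ∧ ω x y 1 = 1)
    (p : G → ZMod 2) (hp : ∀ a b : G, p (a * b) = p a + p b)
    (hsurj : Function.Surjective p)
    (π π' : ℕ → G → ℂˣ)
    (hπ0 : ∀ x, π 0 x = 1) (hπ'0 : ∀ x, π' 0 x = 1)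
    (hπrec : ∀ (m : ℕ) (x : G), π (m + 1) x = ω x (x ^ m) x * π m x)
    (hπ'rec : ∀ (m : ℕ) (x : G),
      π' (m + 1) x = (ω x (x ^ m) x * kappa2 (p x) (p (x ^ m)) (p x)) * π' m x) :
    (∀ (x : G) (m : ℕ), m % 2 = 0 → kappa2 (p x) (p (x ^ m)) (p x) = 1) ∧
    (∀ (x : G) (m : ℕ), p x ≠ 0 → m % 2 = 1 →
      kappa2 (p x) (p (x ^ m)) (p x) = -1) ∧
    (∀ (g x : G) (m : ℕ), p g ≠ 0 →
      π' m (g * x) * (π' m x)⁻¹ =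
        (if m % 4 = 0 ∨ m % 4 = 1 then (1 : ℂˣ) else -1) *
          (π m (g * x) * (π m x)⁻¹)) := by
  classical
  have hp1 : p 1 = 0 := by
    have h := hp 1 1
    rw [one_mul] at h
    exact (left_eq_add.mp h)
  have htwo : ∀ a : ZMod 2, a = 0 ∨ a = 1 := by decide
  have hpow : ∀ (x : G) (m : ℕ), p (x ^ m) = (m : ZMod 2) * p x := by
    intro x m
    induction m with
    | zero => simpa using hp1
    | succ n ih =>
      rw [pow_succ, hp, ih, Nat.cast_succ]
      ring
  have hcast0 : ∀ m : ℕ, m % 2 = 0 → (m : ZMod 2) = 0 := by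
    intro m hm
    exact (ZMod.natCast_eq_zero_iff m 2).mpr (Nat.dvd_of_mod_eq_zero hm)
  have hcast1 : ∀ m : ℕ, m % 2 = 1 → (m : ZMod 2) = 1 := by
    intro m hm
    obtain ⟨k, hk⟩ := Nat.odd_iff.mpr hm
    subst hk
    push_cast
    simp [show ((2:ZMod 2)) = 0 from by decide]
  have part1 : ∀ (x : G) (m : ℕ), m % 2 = 0 → kappa2 (p x) (p (x ^ m)) (p x) = 1 := by
    intro x m hm
    rw [hpow, hcast0 m hm, zero_mul]
    simp [kappa2, show ((0:ZMod 2)) ≠ 1 from by decide]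
  have part2 : ∀ (x : G) (m : ℕ), p x ≠ 0 → m % 2 = 1 →
      kappa2 (p x) (p (x ^ m)) (p x) = -1 := by
    intro x m hx hm
    have hx1 : p x = 1 := (htwo (p x)).resolve_left hx
    rw [hpow, hcast1 m hm, one_mul, hx1]
    simp [kappa2]
  refine ⟨part1, part2, ?_⟩
  have hsign' : ∀ m : ℕ,
      (if m % 4 = 0 ∨ m % 4 = 1 then (1 : ℂˣ) else -1) = (-1 : ℂˣ) ^ (m / 2) := by
    intro m
    rcases Nat.even_or_odd (m / 2) with hh | hh
    · rw [hh.neg_one_pow, if_pos (by have := Nat.even_iff.mp hh; omega)]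
    · rw [hh.neg_one_pow, if_neg (by have := Nat.odd_iff.mp hh; omega)]
  have hkey : ∀ (m : ℕ) (x : G),
      π' m x = (if p x = 1 then (-1 : ℂˣ) ^ (m / 2) else 1) * π m x := by
    intro m x
    induction m with
    | zero => simp [hπ0, hπ'0]
    | succ n ih =>
      rw [hπ'rec, hπrec, ih]
      rcases htwo (p x) with h | h
      · rw [h]
        simp only [show ((0:ZMod 2)) ≠ 1 from by decide, if_neg, if_false, one_mul]
        have hk1 : kappa2 0 (p (x ^ n)) 0 = 1 := by
          simp [kappa2, show ((0:ZMod 2)) ≠ 1 from by decide]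
        rw [hk1, mul_one]
      · rw [h, if_pos rfl, if_pos rfl]
        have hpn : p (x ^ n) = (n : ZMod 2) := by rw [hpow, h, mul_one]
        have hκ : kappa2 (1 : ZMod 2) (p (x ^ n)) 1 * (-1 : ℂˣ) ^ (n / 2)
            = (-1 : ℂˣ) ^ ((n + 1) / 2) := by
          rcases Nat.even_or_odd n with hn | hn
          · have hn2 := Nat.even_iff.mp hn
            have hk1 : kappa2 (1 : ZMod 2) (p (x ^ n)) 1 = 1 := by
              rw [hpn, hcast0 n hn2]
              simp [kappa2, show ((0:ZMod 2)) ≠ 1 from by decide]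
            rw [hk1, one_mul, show (n + 1) / 2 = n / 2 from by omega]
          · have hn2 := Nat.odd_iff.mp hn
            have hk1 : kappa2 (1 : ZMod 2) (p (x ^ n)) 1 = -1 := by
              rw [hpn, hcast1 n hn2]
              simp [kappa2]
            rw [hk1, show (n + 1) / 2 = n / 2 + 1 from by omega, pow_succ, mul_comm]
        rw [← hκ]
        simp only [mul_comm, mul_left_comm, mul_assoc]
  intro g x m hg
  have hg1 : p g = 1 := (htwo (p g)).resolve_left hg
  have hpgx : p (g * x) = 1 + p x := by rw [hp, hg1]
  rw [hkey m (g * x), hkey m x, hsign' m]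
  rcases htwo (p x) with h | h
  · rw [hpgx, h, add_zero]
    rw [if_pos rfl, if_neg (show (0:ZMod 2) ≠ 1 from by decide), one_mul, mul_assoc]
  · rw [hpgx, h, show ((1:ZMod 2) + 1) = 0 from by decide]
    rw [if_neg (show (0:ZMod 2) ≠ 1 from by decide), if_pos rfl, one_mul, mul_inv,
      ← inv_pow, inv_neg, inv_one]
    simp only [mul_comm, mul_left_comm, mul_assoc]
end
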